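/- arXiv:2207.10658 — 2 statements merged into one kernel-verified Lean document; each statement's English description precedes it below -/
import Mathlib

section
/- Let G: (−∞, x₂] → M₂(ℂ) be continuous with ‖G(x)‖ ≤ c·e^{dx} for some c, d > 0, and let f solve the linear ODE f′(x) = G(x) f(x) on (−∞, x₂] with f not identically zero. Then the limit f₀ = lim_{x→−∞} f(x) exists, f₀ ≠ 0, and ‖f(x) − f₀‖ ≤ C·e^{dx} for some constant C > 0 and all x ≤ x₂. -/
/-!
In the time `s = e^{dx} / d` the equation becomes `F' = e^{-dx} G F` on `(0, e^{dx₂} / d]`, with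
coefficient bounded by `c`. Gronwall's inequality, run forwards and backwards on this bounded
interval, bounds `‖F‖` and shows that `F` cannot tend to `0` unless it vanishes identically. Then
`F'` is bounded, so `F` is Lipschitz, has a limit at `0⁺`, and approaches it at a rate linear in
`s`, that is, exponential in `x`.
-/

open Filter Set Topology Real

section LinearGrowth

variable {E : Type*} [NormedAddCommGroup E] [NormedSpace ℝ E] {F F' : ℝ → E} {K : ℝ}

theorem norm_le_norm_mul_exp_of_norm_deriv_le {s t : ℝ} (hst : s ≤ t)
    (hF : ∀ r ∈ Icc s t, HasDerivAt F (F' r) r) (hbound : ∀ r ∈ Icc s t, ‖F' r‖ ≤ K * ‖F r‖) :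
    ‖F t‖ ≤ ‖F s‖ * exp (K * (t - s)) := by
  have := norm_le_gronwallBound_of_norm_deriv_right_le (ε := 0)
    (fun r hr => (hF r hr).continuousAt.continuousWithinAt)
    (fun r hr => (hF r (Ico_subset_Icc_self hr)).hasDerivWithinAt) le_rfl
    (fun r hr => by simpa using hbound r (Ico_subset_Icc_self hr)) t ⟨hst, le_rfl⟩
  rwa [gronwallBound_ε0] at this

theorem norm_le_norm_mul_exp_of_norm_deriv_le_rev {s t : ℝ} (hst : s ≤ t)
    (hF : ∀ r ∈ Icc s t, HasDerivAt F (F' r) r) (hbound : ∀ r ∈ Icc s t, ‖F' r‖ ≤ K * ‖F r‖) :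
    ‖F s‖ ≤ ‖F t‖ * exp (K * (t - s)) := by
  have hmem : ∀ r ∈ Icc s t, s + t - r ∈ Icc s t := fun r hr =>
    ⟨by linarith [hr.2], by linarith [hr.1]⟩
  have := norm_le_norm_mul_exp_of_norm_deriv_le (F := fun r => F (s + t - r))
    (F' := fun r => -F' (s + t - r)) (K := K) hst
    (fun r hr => by
      simpa [Function.comp_def] using
        (hF _ (hmem r hr)).scomp r ((hasDerivAt_id r).const_sub (s + t)))
    (fun r hr => by simpa using hbound _ (hmem r hr))
  simpa using this

theorem exists_tendsto_nhdsGT_of_norm_deriv_le [CompleteSpace E] {a b L : ℝ} (hab : a < b)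
    (hF : ∀ s ∈ Ioc a b, HasDerivAt F (F' s) s) (hbound : ∀ s ∈ Ioc a b, ‖F' s‖ ≤ L) :
    ∃ v, Tendsto F (𝓝[>] a) (𝓝 v) ∧ ∀ s ∈ Ioc a b, ‖F s - v‖ ≤ L * (s - a) := by
  have hlip : ∀ r ∈ Ioc a b, ∀ s ∈ Ioc a b, ‖F s - F r‖ ≤ L * ‖s - r‖ := fun r hr s hs =>
    (convex_Ioc a b).norm_image_sub_le_of_norm_hasDerivWithin_le
      (fun x hx => (hF x hx).hasDerivWithinAt) hbound hr hs
  have hcauchy : Cauchy (map F (𝓝[>] a)) := by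
    have hunif : UniformContinuousOn F (Ioc a b) :=
      ((convex_Ioc a b).lipschitzOnWith_of_nnnorm_hasDerivWithin_le (C := L.toNNReal)
        (fun x hx => (hF x hx).hasDerivWithinAt)
        (fun x hx => by simpa [← NNReal.coe_le_coe] using (hbound x hx).trans (le_max_left L 0))
        ).uniformContinuousOn
    exact (cauchy_nhds.mono nhdsWithin_le_nhds).map_of_le hunif
      (le_principal_iff.2 (Ioc_mem_nhdsGT hab))
  obtain ⟨v, hv⟩ := cauchy_map_iff_exists_tendsto.1 hcauchy
  refine ⟨v, hv, fun s hs => ?_⟩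
  have hlim : Tendsto (fun r => L * (s - r)) (𝓝[>] a) (𝓝 (L * (s - a))) :=
    ((continuous_const.mul (continuous_const.sub continuous_id)).tendsto a).mono_left
      nhdsWithin_le_nhds
  refine le_of_tendsto_of_tendsto ((tendsto_const_nhds.sub hv).norm) hlim ?_
  filter_upwards [Ioo_mem_nhdsGT hs.1] with r hr
  have := hlip r ⟨hr.1, hr.2.le.trans hs.2⟩ s hs
  rwa [Real.norm_of_nonneg (by linarith [hr.2])] at this

theorem exists_ne_zero_tendsto_nhdsGT_of_norm_deriv_le_mul_norm [CompleteSpace E] {a b : ℝ}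
    (hK : 0 ≤ K) (hF : ∀ s ∈ Ioc a b, HasDerivAt F (F' s) s)
    (hbound : ∀ s ∈ Ioc a b, ‖F' s‖ ≤ K * ‖F s‖) (hne : ∃ s ∈ Ioc a b, F s ≠ 0) :
    ∃ v ≠ 0, Tendsto F (𝓝[>] a) (𝓝 v) ∧ ∃ C, ∀ s ∈ Ioc a b, ‖F s - v‖ ≤ C * (s - a) := by
  obtain ⟨s₀, hs₀, hFs₀⟩ := hne
  have hab : a < b := hs₀.1.trans_le hs₀.2
  have hsub : ∀ {s t}, s ∈ Ioc a b → t ≤ b → Icc s t ⊆ Ioc a b := fun hs ht r hr =>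
    ⟨hs.1.trans_le hr.1, hr.2.trans ht⟩
  have hgrowth : ∀ s ∈ Ioc a b, ∀ t ∈ Icc s b, ‖F s‖ ≤ ‖F t‖ * exp (K * (b - a)) ∧
      ‖F t‖ ≤ ‖F s‖ * exp (K * (b - a)) := by
    intro s hs t ht
    have hexp : exp (K * (t - s)) ≤ exp (K * (b - a)) := by
      gcongr; exacts [ht.2, hs.1.le]
    have hF' := fun r hr => hF r (hsub hs ht.2 hr)
    have hbound' := fun r hr => hbound r (hsub hs ht.2 hr)
    exact ⟨(norm_le_norm_mul_exp_of_norm_deriv_le_rev ht.1 hF' hbound').trans (by gcongr),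
      (norm_le_norm_mul_exp_of_norm_deriv_le ht.1 hF' hbound').trans (by gcongr)⟩
  set M := ‖F b‖ * exp (K * (b - a))
  have hM : ∀ s ∈ Ioc a b, ‖F s‖ ≤ M := fun s hs =>
    (hgrowth s hs b ⟨hs.2, le_rfl⟩).1
  obtain ⟨v, hv, hrate⟩ := exists_tendsto_nhdsGT_of_norm_deriv_le hab hF
    (fun s hs => (hbound s hs).trans (mul_le_mul_of_nonneg_left (hM s hs) hK))
  refine ⟨v, ?_, hv, K * M, hrate⟩
  rintro rfl
  refine hFs₀ (norm_le_zero_iff.1 ?_)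
  have hlim : Tendsto (fun r => ‖F r‖ * exp (K * (b - a))) (𝓝[>] a) (𝓝 0) := by
    simpa using (hv.norm.mul_const (exp (K * (b - a))))
  refine ge_of_tendsto hlim ?_
  filter_upwards [Ioo_mem_nhdsGT hs₀.1] with r hr
  exact (hgrowth r ⟨hr.1, hr.2.le.trans hs₀.2⟩ s₀ ⟨hr.2.le, hs₀.2⟩).2

theorem HasDerivAt.comp_log_mul_div {f : ℝ → E} {f' : E} {d s : ℝ} (hds : d * s ≠ 0)
    (hf : HasDerivAt f f' (Real.log (d * s) / d)) :
    HasDerivAt (fun s => f (Real.log (d * s) / d)) ((d * s)⁻¹ • f') s := by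
  have hτ : HasDerivAt (fun s => Real.log (d * s) / d) (d * s)⁻¹ s := by
    refine ((((hasDerivAt_id s).const_mul d).log hds).div_const d).congr_deriv ?_
    simp only [id]
    field_simp [left_ne_zero_of_mul hds]
  exact hf.scomp s hτ

theorem exists_ne_zero_tendsto_atBot_of_norm_deriv_le_exp_mul_norm [CompleteSpace E]
    {f f' : ℝ → E} {x₂ c d : ℝ} (hc : 0 ≤ c) (hd : 0 < d)
    (hf : ∀ x ≤ x₂, HasDerivAt f (f' x) x) (hbound : ∀ x ≤ x₂, ‖f' x‖ ≤ c * exp (d * x) * ‖f x‖)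
    (hne : ∃ x ≤ x₂, f x ≠ 0) :
    ∃ v ≠ 0, Tendsto f atBot (𝓝 v) ∧ ∃ C, ∀ x ≤ x₂, ‖f x - v‖ ≤ C * exp (d * x) := by
  set τ : ℝ → ℝ := fun s => log (d * s) / d
  have hτ : ∀ x, τ (exp (d * x) / d) = x := fun x => by
    simp only [τ, mul_div_cancel₀ _ hd.ne', log_exp, mul_div_cancel_left₀ _ hd.ne']
  have hexpτ : ∀ s > 0, exp (d * τ s) = d * s := fun s hs => by
    simp only [τ, mul_div_cancel₀ _ hd.ne', exp_log (mul_pos hd hs)]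
  have hτ_le : ∀ s ∈ Ioc 0 (exp (d * x₂) / d), τ s ≤ x₂ := fun s hs => by
    rw [div_le_iff₀' hd, log_le_iff_le_exp (mul_pos hd hs.1)]
    exact (le_div_iff₀' hd).1 hs.2
  obtain ⟨v, hv0, hv, C, hC⟩ := exists_ne_zero_tendsto_nhdsGT_of_norm_deriv_le_mul_norm
    (F := f ∘ τ) (F' := fun s => (d * s)⁻¹ • f' (τ s)) hc
    (fun s hs => (hf _ (hτ_le s hs)).comp_log_mul_div (mul_pos hd hs.1).ne')
    (fun s hs => calc
      ‖(d * s)⁻¹ • f' (τ s)‖ ≤ (d * s)⁻¹ * (c * exp (d * τ s) * ‖f (τ s)‖) := by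
        rw [norm_smul, norm_inv, Real.norm_of_nonneg (mul_pos hd hs.1).le]
        exact mul_le_mul_of_nonneg_left (hbound _ (hτ_le s hs)) (inv_pos.2 (mul_pos hd hs.1)).le
      _ = c * ‖(f ∘ τ) s‖ := by
        rw [hexpτ s hs.1, Function.comp_apply]
        field_simp [hs.1.ne'])
    (by
      obtain ⟨x, hx, hfx⟩ := hne
      exact ⟨exp (d * x) / d, ⟨by positivity, by gcongr⟩, by simpa [hτ] using hfx⟩)
  have hσ : Tendsto (fun x => exp (d * x) / d) atBot (𝓝[>] 0) :=
    tendsto_nhdsWithin_iff.2 ⟨by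
      simpa using (tendsto_exp_atBot.comp (tendsto_id.const_mul_atBot hd)).div_const d,
      .of_forall fun x => div_pos (exp_pos _) hd⟩
  refine ⟨v, hv0, by simpa [Function.comp_def, hτ] using hv.comp hσ, C / d, fun x hx => ?_⟩
  rw [div_mul_eq_mul_div, mul_div_assoc]
  simpa [hτ] using hC (exp (d * x) / d) ⟨by positivity, by gcongr⟩

end LinearGrowth

theorem stmt_10_general (x₂ c d : ℝ) (hc : 0 < c) (hd : 0 < d)
    (G : ℝ → ((Fin 2 → ℂ) →L[ℂ] (Fin 2 → ℂ)))
    (hGbound : ∀ x ≤ x₂, ‖G x‖ ≤ c * Real.exp (d * x))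
    (f : ℝ → Fin 2 → ℂ)
    (hf : ∀ x ≤ x₂, HasDerivAt f (G x (f x)) x)
    (hne : ∃ x ≤ x₂, f x ≠ 0) :
    ∃ f₀ : Fin 2 → ℂ, f₀ ≠ 0 ∧ Tendsto f atBot (nhds f₀) ∧
      ∃ C > 0, ∀ x ≤ x₂, ‖f x - f₀‖ ≤ C * Real.exp (d * x) := by
  obtain ⟨f₀, hf₀, hlim, C, hC⟩ := exists_ne_zero_tendsto_atBot_of_norm_deriv_le_exp_mul_norm
    hc.le hd hf (fun x hx => (G x).le_of_opNorm_le (hGbound x hx) (f x)) hne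
  refine ⟨f₀, hf₀, hlim, max C 1, by positivity, fun x hx => (hC x hx).trans ?_⟩
  gcongr
  exact le_max_left C 1

/-- A 2×2 first-order linear ODE system `f' = G f` on `(-∞, x₂]` whose coefficient
matrix decays exponentially as `x → -∞` has solutions converging exponentially to
nonzero constant vectors. -/
theorem stmt_10 (x₂ c d : ℝ) (hc : 0 < c) (hd : 0 < d)
    (G : ℝ → ((Fin 2 → ℂ) →L[ℂ] (Fin 2 → ℂ)))
    (hGcont : ContinuousOn G (Set.Iic x₂))
    (hGbound : ∀ x ≤ x₂, ‖G x‖ ≤ c * Real.exp (d * x))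
    (f : ℝ → Fin 2 → ℂ)
    (hf : ∀ x ≤ x₂, HasDerivAt f (G x (f x)) x)
    (hne : ∃ x ≤ x₂, f x ≠ 0) :
    ∃ f₀ : Fin 2 → ℂ, f₀ ≠ 0 ∧ Tendsto f atBot (nhds f₀) ∧
      ∃ C > 0, ∀ x ≤ x₂, ‖f x - f₀‖ ≤ C * Real.exp (d * x) :=
  stmt_10_general x₂ c d hc hd G hGbound f hf hne
end

section
/- Let Ω₀ ∈ ℝ and let X: (−∞, x₂] → ℂ² solve X′ = (−iΩ₀ σ³ + E(x)) X where σ³ = diag(1,−1) and ‖E(x)‖ ≤ c e^{dx} with c, d > 0, X not identically zero. Then there exist f₀⁺, f₀⁻ ∈ ℂ with |f₀⁺|² + |f₀⁻|² ≠ 0 and constants c′, d′ > 0 such that |X(x) − (e^{−iΩ₀x} f₀⁺, e^{iΩ₀x} f₀⁻)| ≤ c′ e^{d′x} for all x ≤ x₂. -/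
/-!
Conjugating by the unitary flow `e^{iΩ₀σ³x}` turns the system into `Y' = F(x)` with
`‖F(x)‖ ≤ K e^{dx} ‖Y(x)‖`. As `e^{dx}` is integrable at `-∞`, Grönwall's inequality for `‖Y‖²`,
run in both directions, makes `‖Y a‖` and `‖Y b‖` comparable uniformly in `a, b ≤ x₂`. Hence `Y`
is bounded, so `‖Y'‖ = O(e^{dx})` and `Y` converges at `-∞` at rate `e^{dx}`; the limit is nonzero
because `‖Y‖` is also bounded below. Undoing the conjugation gives the plane wave.
-/

open Filter Matrix Set Real Topology

section Gronwall

variable {s : Set ℝ} {v v' κ Ψ : ℝ → ℝ}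

theorem antitoneOn_mul_exp_neg_of_deriv_le (hs : Convex ℝ s)
    (hv : ∀ x ∈ s, HasDerivAt v (v' x) x) (hΨ : ∀ x ∈ s, HasDerivAt Ψ (κ x) x)
    (hle : ∀ x ∈ s, v' x ≤ κ x * v x) :
    AntitoneOn (fun x => v x * exp (-Ψ x)) s := by
  have hderiv : ∀ x ∈ s, HasDerivAt (fun x => v x * exp (-Ψ x))
      ((v' x - κ x * v x) * exp (-Ψ x)) x := fun x hx =>
    ((hv x hx).mul (hΨ x hx).neg.exp).congr_deriv (by simp only [Pi.neg_apply]; ring)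
  refine antitoneOn_of_hasDerivWithinAt_nonpos hs
    (fun x hx => (hderiv x hx).continuousAt.continuousWithinAt)
    (fun x hx => (hderiv x (interior_subset hx)).hasDerivWithinAt) fun x hx => ?_
  exact mul_nonpos_of_nonpos_of_nonneg (sub_nonpos.2 (hle x (interior_subset hx))) (exp_pos _).le

theorem monotoneOn_mul_exp_of_neg_le_deriv (hs : Convex ℝ s)
    (hv : ∀ x ∈ s, HasDerivAt v (v' x) x) (hΨ : ∀ x ∈ s, HasDerivAt Ψ (κ x) x)
    (hle : ∀ x ∈ s, -(κ x * v x) ≤ v' x) :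
    MonotoneOn (fun x => v x * exp (Ψ x)) s := by
  have := antitoneOn_mul_exp_neg_of_deriv_le (v := -v) (Ψ := -Ψ) (κ := -κ) hs
    (fun x hx => (hv x hx).neg) (fun x hx => (hΨ x hx).neg)
    (fun x hx => by simpa [neg_mul_neg] using neg_le_neg (hle x hx))
  intro a ha b hb hab
  simpa using neg_le_neg (this ha hb hab)

end Gronwall

section
variable {E : Type*} [NormedAddCommGroup E] [InnerProductSpace ℝ E] {s : Set ℝ} {a b : ℝ}
  {f f' : ℝ → E} {k Φ : ℝ → ℝ}

theorem norm_le_exp_sub_mul_norm_of_norm_deriv_le (hs : Convex ℝ s)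
    (hf : ∀ x ∈ s, HasDerivAt f (f' x) x) (hΦ : ∀ x ∈ s, HasDerivAt Φ (k x) x)
    (hf' : ∀ x ∈ s, ‖f' x‖ ≤ k x * ‖f x‖) (ha : a ∈ s) (hb : b ∈ s) (hab : a ≤ b) :
    ‖f b‖ ≤ exp (Φ b - Φ a) * ‖f a‖ ∧ ‖f a‖ ≤ exp (Φ b - Φ a) * ‖f b‖ := by
  have hv : ∀ x ∈ s, HasDerivAt (‖f ·‖ ^ 2) (2 * inner ℝ (f x) (f' x)) x :=
    fun x hx => (hf x hx).norm_sq
  have h2Φ : ∀ x ∈ s, HasDerivAt (fun x => 2 * Φ x) (2 * k x) x :=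
    fun x hx => (hΦ x hx).const_mul 2
  have hinner : ∀ x ∈ s, |2 * inner ℝ (f x) (f' x)| ≤ 2 * k x * ‖f x‖ ^ 2 := fun x hx => by
    rw [abs_mul, abs_two, mul_assoc]
    gcongr
    calc |inner ℝ (f x) (f' x)| ≤ ‖f x‖ * ‖f' x‖ := abs_real_inner_le_norm _ _
      _ ≤ ‖f x‖ * (k x * ‖f x‖) := by gcongr; exact hf' x hx
      _ = k x * ‖f x‖ ^ 2 := by ring
  have hanti := antitoneOn_mul_exp_neg_of_deriv_le hs hv h2Φ
    fun x hx => (le_abs_self _).trans (hinner x hx)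
  have hmono := monotoneOn_mul_exp_of_neg_le_deriv hs hv h2Φ
    fun x hx => neg_le_of_abs_le (hinner x hx)
  constructor
  · refine (pow_le_pow_iff_left₀ (norm_nonneg _) (by positivity) two_ne_zero).1 ?_
    calc ‖f b‖ ^ 2 = ‖f b‖ ^ 2 * exp (-(2 * Φ b)) * exp (2 * Φ b) := by
          rw [mul_assoc, ← exp_add]; simp
      _ ≤ ‖f a‖ ^ 2 * exp (-(2 * Φ a)) * exp (2 * Φ b) :=
          mul_le_mul_of_nonneg_right (hanti ha hb hab) (exp_pos _).le
      _ = (exp (Φ b - Φ a) * ‖f a‖) ^ 2 := by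
          rw [mul_pow, ← exp_nat_mul, mul_assoc, ← exp_add]; ring_nf
  · refine (pow_le_pow_iff_left₀ (norm_nonneg _) (by positivity) two_ne_zero).1 ?_
    calc ‖f a‖ ^ 2 = ‖f a‖ ^ 2 * exp (2 * Φ a) * exp (-(2 * Φ a)) := by
          rw [mul_assoc, ← exp_add]; simp
      _ ≤ ‖f b‖ ^ 2 * exp (2 * Φ b) * exp (-(2 * Φ a)) :=
          mul_le_mul_of_nonneg_right (hmono ha hb hab) (exp_pos _).le
      _ = (exp (Φ b - Φ a) * ‖f b‖) ^ 2 := by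
          rw [mul_pow, ← exp_nat_mul, mul_assoc, ← exp_add]; ring_nf

theorem norm_le_exp_mul_norm_of_norm_deriv_le_exp {x₂ K d : ℝ} (hK : 0 ≤ K) (hd : 0 < d)
    (hf : ∀ x ≤ x₂, HasDerivAt f (f' x) x)
    (hf' : ∀ x ≤ x₂, ‖f' x‖ ≤ K * exp (d * x) * ‖f x‖) (ha : a ≤ x₂) (hb : b ≤ x₂) :
    ‖f a‖ ≤ exp (K / d * exp (d * x₂)) * ‖f b‖ := by
  set Φ : ℝ → ℝ := fun x => K / d * exp (d * x)
  have hΦ : ∀ x ∈ Iic x₂, HasDerivAt Φ (K * exp (d * x)) x := fun x _ => by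
    refine (((hasDerivAt_id x).const_mul d).exp.const_mul (K / d)).congr_deriv ?_
    simp only [id, mul_one]
    field_simp
  have hΦ_le : ∀ u ≤ x₂, ∀ w, Φ u - Φ w ≤ Φ x₂ := fun u hu w => by
    have : 0 ≤ Φ w := by positivity
    have : Φ u ≤ Φ x₂ := by simp only [Φ]; gcongr
    linarith
  rcases le_total a b with hab | hba
  · exact (norm_le_exp_sub_mul_norm_of_norm_deriv_le (convex_Iic x₂) hf hΦ hf' ha hb hab).2.trans
      (by gcongr; exact hΦ_le b hb a)
  · exact (norm_le_exp_sub_mul_norm_of_norm_deriv_le (convex_Iic x₂) hf hΦ hf' hb ha hba).1.trans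
      (by gcongr; exact hΦ_le a ha b)

end

-- `‖·‖²` is differentiable only for inner-product norms; `toEuclidean` supplies an equivalent one.
theorem exists_norm_le_mul_norm_of_norm_deriv_le_exp {F : Type*} [NormedAddCommGroup F]
    [NormedSpace ℝ F] [FiniteDimensional ℝ F] {Y Y' : ℝ → F} {x₂ K d : ℝ} (hK : 0 ≤ K)
    (hd : 0 < d) (hY : ∀ x ≤ x₂, HasDerivAt Y (Y' x) x)
    (hY' : ∀ x ≤ x₂, ‖Y' x‖ ≤ K * exp (d * x) * ‖Y x‖) :
    ∃ M, ∀ a ≤ x₂, ∀ b ≤ x₂, ‖Y a‖ ≤ M * ‖Y b‖ := by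
  set e := toEuclidean (E := F)
  set L := e.toContinuousLinearMap
  set L' := e.symm.toContinuousLinearMap
  have hL'L : ∀ y, L' (L y) = y := e.symm_apply_apply
  have hnorm : ∀ y, ‖y‖ ≤ ‖L'‖ * ‖L y‖ := fun y => by
    simpa only [hL'L] using L'.le_opNorm (L y)
  have hZ : ∀ x ≤ x₂, HasDerivAt (fun x => L (Y x)) (L (Y' x)) x := fun x hx =>
    L.hasFDerivAt.comp_hasDerivAt x (hY x hx)
  have hZ' : ∀ x ≤ x₂, ‖L (Y' x)‖ ≤ ‖L‖ * K * ‖L'‖ * exp (d * x) * ‖L (Y x)‖ := fun x hx =>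
    calc ‖L (Y' x)‖ ≤ ‖L‖ * (K * exp (d * x) * ‖Y x‖) := L.le_opNorm_of_le (hY' x hx)
      _ ≤ ‖L‖ * (K * exp (d * x) * (‖L'‖ * ‖L (Y x)‖)) := by gcongr; exact hnorm _
      _ = _ := by ring
  refine ⟨‖L'‖ * exp (‖L‖ * K * ‖L'‖ / d * exp (d * x₂)) * ‖L‖, fun a ha b hb => ?_⟩
  calc ‖Y a‖ ≤ ‖L'‖ * ‖L (Y a)‖ := hnorm _
    _ ≤ ‖L'‖ * (exp (‖L‖ * K * ‖L'‖ / d * exp (d * x₂)) * ‖L (Y b)‖) := by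
        gcongr
        exact norm_le_exp_mul_norm_of_norm_deriv_le_exp (by positivity) hd hZ hZ' ha hb
    _ ≤ ‖L'‖ * (exp (‖L‖ * K * ‖L'‖ / d * exp (d * x₂)) * (‖L‖ * ‖Y b‖)) := by
        gcongr; exact L.le_opNorm _
    _ = _ := by ring

section
variable {F : Type*} [NormedAddCommGroup F] [NormedSpace ℝ F] {w w' : ℝ → F} {x₂ C d : ℝ}

theorem norm_sub_le_of_norm_deriv_le_exp (hd : 0 < d) (hw : ∀ x ≤ x₂, HasDerivAt w (w' x) x)
    (hw' : ∀ x ≤ x₂, ‖w' x‖ ≤ C * exp (d * x)) {a b : ℝ} (hab : a ≤ b) (hb : b ≤ x₂) :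
    ‖w b - w a‖ ≤ C / d * (exp (d * b) - exp (d * a)) := by
  have hB : ∀ x, HasDerivAt (fun x => C / d * (exp (d * x) - exp (d * a))) (C * exp (d * x)) x :=
    fun x => by
      refine ((((hasDerivAt_id x).const_mul d).exp.sub_const _).const_mul (C / d)).congr_deriv ?_
      simp only [id, mul_one]
      field_simp
  refine image_norm_le_of_norm_deriv_right_le_deriv_boundary (f := fun x => w x - w a)
    (fun x hx => ((hw x (hx.2.trans hb)).continuousAt.sub continuousAt_const).continuousWithinAt)
    (fun x hx => ((hw x (hx.2.le.trans hb)).sub_const (w a)).hasDerivWithinAt) (by simp) hB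
    (fun x hx => hw' x (hx.2.le.trans hb)) ⟨hab, le_rfl⟩

theorem tendsto_exp_mul_atBot (hd : 0 < d) : Tendsto (fun x => exp (d * x)) atBot (𝓝 0) :=
  tendsto_exp_atBot.comp (tendsto_id.const_mul_atBot hd)

theorem exists_tendsto_atBot_of_norm_deriv_le_exp [CompleteSpace F] (hd : 0 < d)
    (hw : ∀ x ≤ x₂, HasDerivAt w (w' x) x) (hw' : ∀ x ≤ x₂, ‖w' x‖ ≤ C * exp (d * x)) :
    ∃ w₀, Tendsto w atBot (𝓝 w₀) ∧ ∀ x ≤ x₂, ‖w x - w₀‖ ≤ C / d * exp (d * x) := by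
  have hC : 0 ≤ C := nonneg_of_mul_nonneg_left ((norm_nonneg _).trans (hw' x₂ le_rfl)) (exp_pos _)
  have hcauchy : ∀ a b, a ≤ b → b ≤ x₂ → ‖w b - w a‖ ≤ C / d * exp (d * b) := by
    intro a b hab hb
    refine (norm_sub_le_of_norm_deriv_le_exp hd hw hw' hab hb).trans ?_
    have : 0 ≤ C / d * exp (d * a) := by positivity
    linarith
  set u : ℕ → F := fun n => w (x₂ - n)
  obtain ⟨w₀, hw₀⟩ : ∃ w₀, Tendsto u atTop (𝓝 w₀) := by
    refine cauchySeq_tendsto_of_complete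
      (cauchySeq_of_le_tendsto_0' (fun n => C / d * exp (d * (x₂ - n))) ?_ ?_)
    · intro n m hnm
      rw [dist_eq_norm]
      exact hcauchy _ _ (by gcongr) (by simp)
    · have : Tendsto (fun n : ℕ => x₂ - n) atTop atBot :=
        tendsto_atBot_add_const_left _ x₂ (tendsto_neg_atTop_atBot.comp tendsto_natCast_atTop_atTop)
      simpa using ((tendsto_exp_mul_atBot hd).comp this).const_mul (C / d)
  have hbound : ∀ x ≤ x₂, ‖w x - w₀‖ ≤ C / d * exp (d * x) := by
    intro x hx
    refine le_of_tendsto ((tendsto_const_nhds.sub hw₀).norm) ?_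
    filter_upwards [eventually_ge_atTop ⌈x₂ - x⌉₊] with n hn
    exact hcauchy _ _ (by linarith [Nat.le_ceil (x₂ - x), (Nat.cast_le (α := ℝ)).2 hn]) hx
  refine ⟨w₀, tendsto_iff_norm_sub_tendsto_zero.2 ?_, hbound⟩
  refine squeeze_zero_norm' ?_ (by simpa using (tendsto_exp_mul_atBot hd).const_mul (C / d))
  filter_upwards [eventually_le_atBot x₂] with x hx using by simpa using hbound x hx

end

theorem hasDerivAt_cexp_mul_ofReal (a : ℂ) (t : ℝ) :
    HasDerivAt (fun x : ℝ => Complex.exp (a * x)) (a * Complex.exp (a * t)) t := by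
  simpa [mul_comm] using ((hasDerivAt_id t).ofReal_comp.const_mul a).cexp

section

variable {ι : Type*} [Fintype ι]

theorem norm_mulVec_le_of_forall_norm_le {A : Matrix ι ι ℂ} {r : ℝ} (hr : 0 ≤ r)
    (hA : ∀ i j, ‖A i j‖ ≤ r) (v : ι → ℂ) : ‖A *ᵥ v‖ ≤ Fintype.card ι * r * ‖v‖ := by
  refine (pi_norm_le_iff_of_nonneg (by positivity)).2 fun i => ?_
  calc ‖(A *ᵥ v) i‖ ≤ ∑ j, ‖A i j‖ * ‖v j‖ := by
        simpa only [mulVec, dotProduct, norm_mul] using norm_sum_le Finset.univ fun j => A i j * v j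
    _ ≤ ∑ _j : ι, r * ‖v‖ :=
        Finset.sum_le_sum fun j _ => mul_le_mul (hA i j) (norm_le_pi_norm v j) (norm_nonneg _) hr
    _ = _ := by simp [mul_assoc]

theorem pi_norm_cexp_mul_eq_of_re_eq_zero {μ : ι → ℂ} (hμ : ∀ i, (μ i).re = 0) (x : ℝ) (v : ι → ℂ) :
    ‖fun i => Complex.exp (μ i * x) * v i‖ = ‖v‖ := by
  have h : ∀ i, ‖Complex.exp (μ i * x) * v i‖ = ‖v i‖ := fun i => by
    simp [Complex.norm_exp, Complex.mul_re, hμ]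
  refine le_antisymm ((pi_norm_le_iff_of_nonneg (norm_nonneg v)).2 fun i => ?_)
    ((pi_norm_le_iff_of_nonneg (norm_nonneg _)).2 fun i => ?_)
  · exact (h i).le.trans (norm_le_pi_norm v i)
  · exact (h i).ge.trans (norm_le_pi_norm (fun i => Complex.exp (μ i * x) * v i) i)

theorem exists_norm_sub_exp_mul_le_of_hasDerivAt_diagonal_add [DecidableEq ι] {μ : ι → ℂ}
    (hμ : ∀ i, (μ i).re = 0) {E : ℝ → Matrix ι ι ℂ} {X : ℝ → ι → ℂ} {x₀ x₂ c d : ℝ}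
    (hc : 0 ≤ c) (hd : 0 < d) (hE : ∀ x ≤ x₂, ∀ i j, ‖E x i j‖ ≤ c * exp (d * x))
    (hX : ∀ x ≤ x₂, HasDerivAt X ((diagonal μ + E x) *ᵥ X x) x) (hx₀ : x₀ ≤ x₂)
    (hX₀ : X x₀ ≠ 0) :
    ∃ f : ι → ℂ, f ≠ 0 ∧ ∃ C, ∀ x ≤ x₂,
      ‖X x - fun i => Complex.exp (μ i * x) * f i‖ ≤ C * exp (d * x) := by
  set Y : ℝ → ι → ℂ := fun x i => Complex.exp (-μ i * x) * X x i
  have hμ' : ∀ i, (-μ i).re = 0 := fun i => by simp [hμ]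
  have hnormY : ∀ x, ‖Y x‖ = ‖X x‖ := fun x => pi_norm_cexp_mul_eq_of_re_eq_zero hμ' x (X x)
  have hY : ∀ x ≤ x₂, HasDerivAt Y (fun i => Complex.exp (-μ i * x) * (E x *ᵥ X x) i) x :=
    fun x hx => hasDerivAt_pi.2 fun i => by
      have hXi := hasDerivAt_pi.1 (hX x hx) i
      simp only [add_mulVec, mulVec_diagonal, Pi.add_apply] at hXi
      exact ((hasDerivAt_cexp_mul_ofReal (-μ i) x).mul hXi).congr_deriv (by ring)
  have hY' : ∀ x ≤ x₂, ‖fun i => Complex.exp (-μ i * x) * (E x *ᵥ X x) i‖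
      ≤ Fintype.card ι * c * exp (d * x) * ‖Y x‖ := fun x hx => by
    rw [pi_norm_cexp_mul_eq_of_re_eq_zero hμ', hnormY, mul_assoc _ c]
    exact norm_mulVec_le_of_forall_norm_le (by positivity) (hE x hx) _
  obtain ⟨M, hM⟩ := exists_norm_le_mul_norm_of_norm_deriv_le_exp (by positivity) hd hY hY'
  obtain ⟨f, hYf, hf⟩ := exists_tendsto_atBot_of_norm_deriv_le_exp hd hY fun x hx =>
    calc _ ≤ Fintype.card ι * c * exp (d * x) * ‖Y x‖ := hY' x hx
      _ ≤ Fintype.card ι * c * exp (d * x) * (M * ‖Y x₂‖) := by gcongr; exact hM x hx x₂ le_rfl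
      _ = Fintype.card ι * c * M * ‖Y x₂‖ * exp (d * x) := by ring
  refine ⟨f, ?_, Fintype.card ι * c * M * ‖Y x₂‖ / d, fun x hx => ?_⟩
  · rintro rfl
    have : ‖Y x₀‖ ≤ M * ‖(0 : ι → ℂ)‖ :=
      ge_of_tendsto (hYf.norm.const_mul M) <| by
        filter_upwards [eventually_le_atBot x₂] with x hx using hM x₀ hx₀ x hx
    simp [hnormY, hX₀] at this
  · have hgauge : X x - (fun i => Complex.exp (μ i * x) * f i)
        = fun i => Complex.exp (μ i * x) * (Y x - f) i := by
      funext i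
      simp only [Y, Pi.sub_apply, mul_sub, ← mul_assoc, ← Complex.exp_add]
      simp
    rw [hgauge, pi_norm_cexp_mul_eq_of_re_eq_zero hμ]
    exact hf x hx

end

theorem stmt_11_general (x₂ c d Ω₀ : ℝ) (hc : 0 < c) (hd : 0 < d)
    (E : ℝ → Matrix (Fin 2) (Fin 2) ℂ)
    (hEbound : ∀ x ≤ x₂, ∀ i j, ‖E x i j‖ ≤ c * Real.exp (d * x))
    (X : ℝ → Fin 2 → ℂ)
    (hX : ∀ x ≤ x₂, HasDerivAt X
      ((((-Complex.I * (Ω₀ : ℂ)) • (!![1,0;0,-1] : Matrix (Fin 2) (Fin 2) ℂ)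
        + E x).mulVec (X x))) x)
    (hne : ∃ x ≤ x₂, X x ≠ 0) :
    ∃ (f₀p f₀m : ℂ), ‖f₀p‖^2 + ‖f₀m‖^2 ≠ 0 ∧
      ∃ c' > 0, ∃ d' > 0, ∀ x ≤ x₂,
        ‖X x - ![Complex.exp (-Complex.I * Ω₀ * x) * f₀p,
                 Complex.exp (Complex.I * Ω₀ * x) * f₀m]‖ ≤ c' * Real.exp (d' * x) := by
  obtain ⟨x₀, hx₀, hX₀⟩ := hne
  set μ : Fin 2 → ℂ := ![-Complex.I * Ω₀, Complex.I * Ω₀]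
  have hσ : (-Complex.I * Ω₀) • !![1, 0; 0, -1] = diagonal μ := by
    ext i j; fin_cases i <;> fin_cases j <;> simp [μ]
  obtain ⟨f, hf, C, hC⟩ := exists_norm_sub_exp_mul_le_of_hasDerivAt_diagonal_add (μ := μ)
    (fun i => by fin_cases i <;> simp [μ]) hc.le hd hEbound (fun x hx => hσ ▸ hX x hx) hx₀ hX₀
  refine ⟨f 0, f 1, fun hsum => hf ?_, max C 1, by positivity, d, hd, fun x hx => ?_⟩
  · obtain ⟨h0, h1⟩ := (add_eq_zero_iff_of_nonneg (sq_nonneg _) (sq_nonneg _)).1 hsum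
    funext i
    fin_cases i
    · simpa using h0
    · simpa using h1
  · have hwave : (fun i => Complex.exp (μ i * x) * f i)
        = ![Complex.exp (-Complex.I * Ω₀ * x) * f 0, Complex.exp (Complex.I * Ω₀ * x) * f 1] := by
      funext i; fin_cases i <;> simp [μ]
    rw [← hwave]
    exact (hC x hx).trans (by gcongr; exact le_max_left C 1)

/-- Oscillatory asymptotics near the horizon (Lemma 1 of the paper, abstract form):
solutions of `X' = (-iΩ₀σ³ + E(x))X` with `‖E(x)‖ ≤ c e^{dx}` approach, up to an
exponentially small error, a plane wave `(e^{-iΩ₀x}f₀⁺, e^{iΩ₀x}f₀⁻)` with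
`(f₀⁺, f₀⁻) ≠ 0`. -/
theorem stmt_11 (x₂ c d Ω₀ : ℝ) (hc : 0 < c) (hd : 0 < d)
    (E : ℝ → Matrix (Fin 2) (Fin 2) ℂ)
    (hEcont : ContinuousOn E (Set.Iic x₂))
    (hEbound : ∀ x ≤ x₂, ∀ i j, ‖E x i j‖ ≤ c * Real.exp (d * x))
    (X : ℝ → Fin 2 → ℂ)
    (hX : ∀ x ≤ x₂, HasDerivAt X
      ((((-Complex.I * (Ω₀ : ℂ)) • (!![1,0;0,-1] : Matrix (Fin 2) (Fin 2) ℂ)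
        + E x).mulVec (X x))) x)
    (hne : ∃ x ≤ x₂, X x ≠ 0) :
    ∃ (f₀p f₀m : ℂ), ‖f₀p‖^2 + ‖f₀m‖^2 ≠ 0 ∧
      ∃ c' > 0, ∃ d' > 0, ∀ x ≤ x₂,
        ‖X x - ![Complex.exp (-Complex.I * Ω₀ * x) * f₀p,
                 Complex.exp (Complex.I * Ω₀ * x) * f₀m]‖ ≤ c' * Real.exp (d' * x) :=
  stmt_11_general x₂ c d Ω₀ hc hd E hEbound X hX hne
end
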